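/- For every model class M ⊆ M⁺, every γ > 0, and every M̄ ∈ M⁺: dec^o_γ(M, M̄) ≤ dec^c_{γ^{−1/2}}(M, M̄). -/

import Mathlib

open MeasureTheory ProbabilityTheory
open scoped ENNReal NNReal

noncomputable section

/-- The squared Hellinger distance between two measures, computed with respect to the
common dominating measure `P + Q`. -/
def sqHellinger {Z : Type} [MeasurableSpace Z] (P Q : Measure Z) : ℝ :=
  ∫ z, (Real.sqrt ((P.rnDeriv (P + Q)) z).toReal
      - Real.sqrt ((Q.rnDeriv (P + Q)) z).toReal) ^ 2 ∂(P + Q)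

/-- A model: a Markov kernel from decisions to distributions over reward/observation pairs,
with rewards supported in `[0,1]`, together with a maximizing decision
(whose existence is assumed). -/
structure Model (X Y : Type) [MeasurableSpace X] [MeasurableSpace Y] where
  k : Kernel X (ℝ × Y)
  markov : IsMarkovKernel k
  reward01 : ∀ x : X, (k x) {ry : ℝ × Y | ry.1 ∈ Set.Icc (0 : ℝ) 1}ᶜ = 0
  opt : X
  opt_max : ∀ x : X, (∫ ry, ry.1 ∂(k x)) ≤ ∫ ry, ry.1 ∂(k opt)

variable {X Y : Type} [MeasurableSpace X] [MeasurableSpace Y]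

/-- Mean reward `f^M(x)`. -/
def fm (M : Model X Y) (x : X) : ℝ := ∫ ry, ry.1 ∂(M.k x)

/-- Suboptimality gap `g^M(x) = f^M(π_M) - f^M(x)`. -/
def gap (M : Model X Y) (x : X) : ℝ := fm M M.opt - fm M x

/-- Expected suboptimality of a decision distribution `p` under model `M`. -/
def avgGap (p : ProbabilityMeasure X) (M : Model X Y) : ℝ :=
  ∫ x, gap M x ∂(p : Measure X)

/-- Expected squared Hellinger distance between `M` and `Mbar` under `p`. -/
def avgHell (p : ProbabilityMeasure X) (M Mbar : Model X Y) : ℝ :=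
  ∫ x, sqHellinger (M.k x) (Mbar.k x) ∂(p : Measure X)

/-- The constrained regret Decision-Estimation Coefficient. -/
def decC (ε : ℝ) (𝓜 : Set (Model X Y)) (Mbar : Model X Y) : ℝ :=
  ⨅ p : ProbabilityMeasure X,
    ⨆ M ∈ {M ∈ 𝓜 | avgHell p M Mbar ≤ ε ^ 2}, avgGap p M

/-- The offset regret Decision-Estimation Coefficient. -/
def decO (γ : ℝ) (𝓜 : Set (Model X Y)) (Mbar : Model X Y) : ℝ :=
  ⨅ p : ProbabilityMeasure X, ⨆ M ∈ 𝓜, (avgGap p M - γ * avgHell p M Mbar)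

/-- The constrained PAC Decision-Estimation Coefficient. -/
def decCpac (ε : ℝ) (𝓜 : Set (Model X Y)) (Mbar : Model X Y) : ℝ :=
  ⨅ p : ProbabilityMeasure X, ⨅ q : ProbabilityMeasure X,
    ⨆ M ∈ {M ∈ 𝓜 | avgHell q M Mbar ≤ ε ^ 2}, avgGap p M

/-- The offset PAC Decision-Estimation Coefficient. -/
def decOpac (γ : ℝ) (𝓜 : Set (Model X Y)) (Mbar : Model X Y) : ℝ :=
  ⨅ p : ProbabilityMeasure X, ⨅ q : ProbabilityMeasure X,
    ⨆ M ∈ 𝓜, (avgGap p M - γ * avgHell q M Mbar)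

/-- A distribution over a class of models, represented as a probability space together with
a (measurable) family of models belonging to the class. -/
structure ClassDist (X Y : Type) [MeasurableSpace X] [MeasurableSpace Y]
    (𝓜 : Set (Model X Y)) where
  (Ω : Type)
  [iΩ : MeasurableSpace Ω]
  (ν : Measure Ω)
  (prob : IsProbabilityMeasure ν)
  (m : Ω → Model X Y)
  (mem : ∀ ω, m ω ∈ 𝓜)
  (meas : ∀ (x : X) (A : Set (ℝ × Y)), MeasurableSet A → Measurable fun ω => (m ω).k x A)

attribute [instance] ClassDist.iΩ

/-- `Mbar` is the mixture (mean) model of the class distribution `D`. -/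
def IsMixtureOf {𝓜 : Set (Model X Y)} (D : ClassDist X Y 𝓜) (Mbar : Model X Y) : Prop :=
  ∀ (x : X) (A : Set (ℝ × Y)), MeasurableSet A →
    Mbar.k x A = ∫⁻ ω, (D.m ω).k x A ∂D.ν

/-- The convex hull of a model class: all mixtures of models in the class. -/
def convHull (𝓜 : Set (Model X Y)) : Set (Model X Y) :=
  {Mbar | ∃ D : ClassDist X Y 𝓜, IsMixtureOf D Mbar}

/-- `dec^c_ε(𝓜) = sup_{Mbar ∈ co(𝓜)} dec^c_ε(𝓜 ∪ {Mbar}, Mbar)`. -/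
def decCfull (ε : ℝ) (𝓜 : Set (Model X Y)) : ℝ :=
  ⨆ Mbar ∈ convHull 𝓜, decC ε (𝓜 ∪ {Mbar}) Mbar

/-- `dec^{c,pac}_ε(𝓜) = sup_{Mbar ∈ co(𝓜)} dec^{c,pac}_ε(𝓜, Mbar)`. -/
def decCpacFull (ε : ℝ) (𝓜 : Set (Model X Y)) : ℝ :=
  ⨆ Mbar ∈ convHull 𝓜, decCpac ε 𝓜 Mbar

/-- The localized subclass `𝓜_α(Mbar)`. -/
def locClass (α : ℝ) (𝓜 : Set (Model X Y)) (Mbar : Model X Y) : Set (Model X Y) :=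
  {M ∈ 𝓜 | fm M M.opt ≤ fm Mbar Mbar.opt + α}

/-- The greedy PAC Decision-Estimation Coefficient. -/
def decGpac (ε : ℝ) (𝓜 : Set (Model X Y)) (Mbar : Model X Y) : ℝ :=
  ⨅ q : ProbabilityMeasure X,
    ⨆ M ∈ {M ∈ 𝓜 | avgHell q M Mbar ≤ ε ^ 2}, (fm M M.opt - fm M Mbar.opt)

/-- The PAC DEC with Hellinger constraints under both `p` and `q`. -/
def decAlt (ε : ℝ) (𝓜 : Set (Model X Y)) (Mbar : Model X Y) : ℝ :=
  ⨅ p : ProbabilityMeasure X, ⨅ q : ProbabilityMeasure X,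
    ⨆ M ∈ {M ∈ 𝓜 | avgHell p M Mbar ≤ ε ^ 2 ∧ avgHell q M Mbar ≤ ε ^ 2}, avgGap p M

/-- Expected squared Hellinger distance to a randomized reference model. -/
def randAvgHell {𝓜 : Set (Model X Y)} (p : ProbabilityMeasure X) (M : Model X Y)
    (D : ClassDist X Y 𝓜) : ℝ :=
  ∫ ω, avgHell p M (D.m ω) ∂D.ν

/-- The randomized offset regret DEC. -/
def decOrand (γ : ℝ) {𝓜₀ : Set (Model X Y)} (𝓜 : Set (Model X Y))
    (D : ClassDist X Y 𝓜₀) : ℝ :=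
  ⨅ p : ProbabilityMeasure X, ⨆ M ∈ 𝓜, (avgGap p M - γ * randAvgHell p M D)

/-- The randomized constrained regret DEC. -/
def decCrand (ε : ℝ) {𝓜₀ : Set (Model X Y)} (𝓜 : Set (Model X Y))
    (D : ClassDist X Y 𝓜₀) : ℝ :=
  ⨅ p : ProbabilityMeasure X,
    ⨆ M ∈ {M ∈ 𝓜 | randAvgHell p M D ≤ ε ^ 2}, avgGap p M

/-- The randomized offset PAC DEC. -/
def decOpacRand (γ : ℝ) {𝓜₀ : Set (Model X Y)} (𝓜 : Set (Model X Y))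
    (D : ClassDist X Y 𝓜₀) : ℝ :=
  ⨅ p : ProbabilityMeasure X, ⨅ q : ProbabilityMeasure X,
    ⨆ M ∈ 𝓜, (avgGap p M - γ * randAvgHell q M D)

/-- The Bayesian offset regret DEC (sup over priors of the inf over decision distributions). -/
def bayesDecO (γ : ℝ) (𝓜 : Set (Model X Y)) (Mbar : Model X Y) : ℝ :=
  sSup {x : ℝ | ∃ D : ClassDist X Y 𝓜,
    x = ⨅ p : ProbabilityMeasure X,
          ∫ ω, (avgGap p (D.m ω) - γ * avgHell p (D.m ω) Mbar) ∂D.ν}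

/-- The Bayesian offset PAC DEC. -/
def bayesDecOpac (γ : ℝ) (𝓜 : Set (Model X Y)) (Mbar : Model X Y) : ℝ :=
  sSup {x : ℝ | ∃ D : ClassDist X Y 𝓜,
    x = ⨅ p : ProbabilityMeasure X, ⨅ q : ProbabilityMeasure X,
          ∫ ω, (avgGap p (D.m ω) - γ * avgHell q (D.m ω) Mbar) ∂D.ν}

/-- Histories of interaction. -/
abbrev Hist (X Y : Type) (n : ℕ) := Fin n → X × ℝ × Y

/-- Prefix of a history. -/
def hPrefix {n : ℕ} (h : Hist X Y n) (t : ℕ) (ht : t ≤ n) : Hist X Y t :=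
  fun i => h (Fin.castLE ht i)

/-- Law of the interaction history under model `M` and selection rule `sel`. -/
def histLaw (M : Model X Y) (sel : (n : ℕ) → Hist X Y n → Measure X) :
    (n : ℕ) → Measure (Hist X Y n)
  | 0 => Measure.dirac (fun i => i.elim0)
  | n + 1 =>
    (histLaw M sel n).bind fun h =>
      (sel n h).bind fun x =>
        (M.k x).bind fun ry => Measure.dirac (Fin.snoc h (x, ry))

/-- A regret-minimization algorithm: a sequence of probability kernels from histories
to decisions. -/
structure RegAlg (X Y : Type) [MeasurableSpace X] [MeasurableSpace Y] where
  sel : (n : ℕ) → Hist X Y n → Measure X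
  prob : ∀ n h, IsProbabilityMeasure (sel n h)
  meas : ∀ n, Measurable (sel n)

instance [Nonempty X] : Nonempty (RegAlg X Y) :=
  ⟨⟨fun _ _ => Measure.dirac (Classical.arbitrary X),
    fun _ _ => by infer_instance, fun _ => measurable_const⟩⟩

/-- Expected cumulative regret of algorithm `A` under model `M` over `T` rounds. -/
def expRegret (M : Model X Y) (A : RegAlg X Y) (T : ℕ) : ℝ :=
  ∑ t ∈ Finset.range T, ∫ h, (∫ x, gap M x ∂(A.sel t h)) ∂(histLaw M A.sel t)

/-- A PAC algorithm with `T` rounds of interaction: exploration kernels together with an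
output kernel. -/
structure PacAlg (X Y : Type) [MeasurableSpace X] [MeasurableSpace Y] (T : ℕ) where
  explore : (n : ℕ) → Hist X Y n → Measure X
  explore_prob : ∀ n h, IsProbabilityMeasure (explore n h)
  explore_meas : ∀ n, Measurable (explore n)
  out : Hist X Y T → Measure X
  out_prob : ∀ h, IsProbabilityMeasure (out h)
  out_meas : Measurable out

/-- Risk of the PAC algorithm conditionally on the realized history. -/
def condRisk (M : Model X Y) {T : ℕ} (A : PacAlg X Y T) (h : Hist X Y T) : ℝ :=
  ∫ x, gap M x ∂(A.out h)

/-- Expected risk of PAC algorithm `A` under model `M`. -/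
def pacRisk (M : Model X Y) {T : ℕ} (A : PacAlg X Y T) : ℝ :=
  ∫ h, condRisk M A h ∂(histLaw M A.explore T)

/-- The density-ratio bound `V(𝓜)`. -/
def Vval (𝓜 : Set (Model X Y)) : ℝ≥0∞ :=
  max (ENNReal.ofReal (Real.exp 1))
    (⨆ M ∈ 𝓜, ⨆ M' ∈ 𝓜, ⨆ x : X,
      ⨆ A ∈ {A : Set (ℝ × Y) | MeasurableSet A}, M.k x A / M'.k x A)

/-- `C(T) = log (min (T, V(𝓜)))`. -/
def Cval (𝓜 : Set (Model X Y)) (T : ℕ) : ℝ :=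
  Real.log ((min (T : ℝ≥0∞) (Vval 𝓜)).toReal)

/-- An online estimation oracle for the class `𝓜` with estimation-error bound `Est`. -/
structure EstOracle (X Y : Type) [MeasurableSpace X] [MeasurableSpace Y]
    (𝓜 : Set (Model X Y)) (Est : ℝ → ℝ → ℝ) where
  est : (T' : ℕ) → (δ' : ℝ) → (n : ℕ) → Hist X Y n → Model X Y
  est_mem : ∀ T' δ' n h, est T' δ' n h ∈ convHull 𝓜
  guarantee : ∀ (T' : ℕ) (δ' : ℝ), 0 < δ' → ∀ Mstar ∈ 𝓜, ∀ A : RegAlg X Y,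
    ((histLaw Mstar A.sel T')
      {h : Hist X Y T' |
        (∑ t : Fin T',
          ∫ x, sqHellinger (Mstar.k x)
              ((est T' δ' (t : ℕ) (hPrefix h (t : ℕ) t.2.le)).k x)
            ∂(A.sel (t : ℕ) (hPrefix h (t : ℕ) t.2.le)))
          ≤ Est (T' : ℝ) δ'}).toReal ≥ 1 - δ'

/-- A constrained online estimation oracle for the class `𝓜`. -/
structure CEstOracle (X Y : Type) [MeasurableSpace X] [MeasurableSpace Y]
    (𝓜 : Set (Model X Y)) (Est : ℝ → ℝ → ℝ) where
  est : (𝓜' : Set (Model X Y)) → (T' : ℕ) → (δ' : ℝ) → (n : ℕ) → Hist X Y n → Model X Y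
  est_mem : ∀ 𝓜', 𝓜' ⊆ 𝓜 → ∀ T' δ' n h, est 𝓜' T' δ' n h ∈ convHull 𝓜'
  guarantee : ∀ 𝓜', 𝓜' ⊆ 𝓜 → ∀ (T' : ℕ) (δ' : ℝ), 0 < δ' → ∀ Mstar ∈ 𝓜',
    ∀ A : RegAlg X Y,
    ((histLaw Mstar A.sel T')
      {h : Hist X Y T' |
        (∑ t : Fin T',
          ∫ x, sqHellinger (Mstar.k x)
              ((est 𝓜' T' δ' (t : ℕ) (hPrefix h (t : ℕ) t.2.le)).k x)
            ∂(A.sel (t : ℕ) (hPrefix h (t : ℕ) t.2.le)))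
          ≤ Est (T' : ℝ) δ'}).toReal ≥ 1 - δ'

/-- A packaged (decision space, observation space) pair. -/
structure MSpace where
  (X : Type)
  (Y : Type)
  [iX : MeasurableSpace X]
  [iY : MeasurableSpace Y]
  [nX : Nonempty X]

attribute [instance] MSpace.iX MSpace.iY MSpace.nX

end

/-!
For a fixed decision distribution `p`, every model of the class either satisfies the Hellinger
constraint `E_p[D²_H] ≤ 1/γ`, in which case its offset objective is at most its regret, or it
violates it, in which case `γ · E_p[D²_H] > 1 ≥ E_p[g^M]` makes its offset objective negative.
Either way it is bounded by the constrained supremum, which is nonnegative since regrets are.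
-/

namespace Real

variable {ι α : Type*}

theorem le_biSup_of_bddAbove {f : α → ℝ} (hf : BddAbove (Set.range f)) {S : Set α} {a : α}
    (ha : a ∈ S) : f a ≤ ⨆ x ∈ S, f x := by
  obtain ⟨C, hC⟩ := hf
  have hbdd : BddAbove (Set.range fun x => ⨆ _ : x ∈ S, f x) := by
    refine ⟨max C 0, ?_⟩
    rintro _ ⟨x, rfl⟩
    exact Real.iSup_le (fun _ => (hC ⟨x, rfl⟩).trans (le_max_left _ _)) (le_max_right _ _)
  exact le_ciSup_of_le hbdd a (ciSup_pos (f := fun _ => f a) ha).ge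

/-- The nonnegativity of `g` covers the junk value `⨅ i, f i = 0` when `f` is unbounded below. -/
theorem iInf_mono_of_nonneg {f g : ι → ℝ} (hfg : ∀ i, f i ≤ g i) (hg : ∀ i, 0 ≤ g i) :
    ⨅ i, f i ≤ ⨅ i, g i := by
  by_cases hf : BddBelow (Set.range f)
  · exact ciInf_mono hf hfg
  · rw [Real.iInf_of_not_bddBelow hf]
    exact Real.iInf_nonneg hg

end Real

section Bounds

variable {X Y : Type} [MeasurableSpace X] [MeasurableSpace Y]

theorem Model.ae_reward_mem_Icc (M : Model X Y) (x : X) :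
    ∀ᵐ ry ∂(M.k x), ry.1 ∈ Set.Icc (0 : ℝ) 1 := by
  rw [ae_iff]
  simpa only [Set.compl_ofPred] using M.reward01 x

theorem fm_nonneg (M : Model X Y) (x : X) : 0 ≤ fm M x :=
  integral_nonneg_of_ae ((M.ae_reward_mem_Icc x).mono fun _ h => h.1)

theorem fm_le_one (M : Model X Y) (x : X) : fm M x ≤ 1 := by
  have := M.markov
  calc fm M x ≤ ∫ _, (1 : ℝ) ∂(M.k x) :=
        integral_mono_of_nonneg ((M.ae_reward_mem_Icc x).mono fun _ h => h.1)
          (integrable_const 1) ((M.ae_reward_mem_Icc x).mono fun _ h => h.2)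
    _ = 1 := by simp

theorem gap_nonneg (M : Model X Y) (x : X) : 0 ≤ gap M x :=
  sub_nonneg.2 (M.opt_max x)

theorem gap_le_one (M : Model X Y) (x : X) : gap M x ≤ 1 := by
  unfold gap
  linarith [fm_le_one M M.opt, fm_nonneg M x]

theorem avgGap_nonneg (p : ProbabilityMeasure X) (M : Model X Y) : 0 ≤ avgGap p M :=
  integral_nonneg fun x => gap_nonneg M x

theorem avgGap_le_one (p : ProbabilityMeasure X) (M : Model X Y) : avgGap p M ≤ 1 :=
  calc avgGap p M ≤ ∫ _, (1 : ℝ) ∂(p : Measure X) :=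
        integral_mono_of_nonneg (ae_of_all _ fun x => gap_nonneg M x) (integrable_const 1)
          (ae_of_all _ fun x => gap_le_one M x)
    _ = 1 := by simp

theorem avgHell_nonneg (p : ProbabilityMeasure X) (M Mbar : Model X Y) :
    0 ≤ avgHell p M Mbar :=
  integral_nonneg fun _ => integral_nonneg fun _ => sq_nonneg _

theorem biSup_avgGap_nonneg (p : ProbabilityMeasure X) (S : Set (Model X Y)) :
    0 ≤ ⨆ M ∈ S, avgGap p M :=
  Real.iSup_nonneg fun M => Real.iSup_nonneg fun _ => avgGap_nonneg p M

theorem le_biSup_avgGap (p : ProbabilityMeasure X) {S : Set (Model X Y)} {M : Model X Y}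
    (hM : M ∈ S) : avgGap p M ≤ ⨆ M' ∈ S, avgGap p M' :=
  Real.le_biSup_of_bddAbove ⟨1, by rintro _ ⟨M', rfl⟩; exact avgGap_le_one p M'⟩ hM

end Bounds

theorem biSup_offset_le_biSup_constrained {X Y : Type} [MeasurableSpace X] [MeasurableSpace Y]
    (p : ProbabilityMeasure X) (𝓜 : Set (Model X Y)) (Mbar : Model X Y) {γ ε : ℝ}
    (hγε : 1 ≤ γ * ε ^ 2) :
    ⨆ M ∈ 𝓜, (avgGap p M - γ * avgHell p M Mbar) ≤
      ⨆ M ∈ {M ∈ 𝓜 | avgHell p M Mbar ≤ ε ^ 2}, avgGap p M := by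
  have hR := biSup_avgGap_nonneg p {M ∈ 𝓜 | avgHell p M Mbar ≤ ε ^ 2}
  refine Real.iSup_le (fun M => Real.iSup_le (fun hM => ?_) hR) hR
  have hγ : 0 < γ := by nlinarith [sq_nonneg ε]
  have hHell := avgHell_nonneg p M Mbar
  by_cases hclose : avgHell p M Mbar ≤ ε ^ 2
  · calc avgGap p M - γ * avgHell p M Mbar ≤ avgGap p M := by nlinarith
      _ ≤ _ := le_biSup_avgGap p (S := {M ∈ 𝓜 | avgHell p M Mbar ≤ ε ^ 2}) ⟨hM, hclose⟩
  · have := avgGap_le_one p M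
    nlinarith

theorem offset_le_constrained_general {X Y : Type} [MeasurableSpace X] [MeasurableSpace Y]
    (𝓜 : Set (Model X Y)) (Mbar : Model X Y) (γ : ℝ) (hγ : 0 < γ) :
    decO γ 𝓜 Mbar ≤ decC (1 / Real.sqrt γ) 𝓜 Mbar := by
  have hγε : 1 ≤ γ * (1 / Real.sqrt γ) ^ 2 := by
    rw [div_pow, one_pow, Real.sq_sqrt hγ.le, mul_one_div_cancel hγ.ne']
  exact Real.iInf_mono_of_nonneg
    (fun p => biSup_offset_le_biSup_constrained p 𝓜 Mbar hγε)
    (fun p => biSup_avgGap_nonneg p _)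

/-- offset regret DEC bounded by constrained regret DEC at radius γ^(-1/2). -/
theorem offset_le_constrained {X Y : Type} [MeasurableSpace X] [MeasurableSpace Y] [Nonempty X]
    (𝓜 : Set (Model X Y)) (Mbar : Model X Y) (γ : ℝ) (hγ : 0 < γ) :
    decO γ 𝓜 Mbar ≤ decC (1 / Real.sqrt γ) 𝓜 Mbar :=
  offset_le_constrained_general 𝓜 Mbar γ hγ
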